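/- arXiv:1012.4856 — 4 statements merged into one kernel-verified Lean document; each statement's English description precedes it below -/
import Mathlib

section
/- Let G be a connected simple graph on n ≥ 3 vertices with Randić index R, algebraic connectivity a, and edge connectivity κ'. If κ' ≥ 2, then R/a < ((n - 3 + 2√2)/2) / (2(1 - cos(π/n))), i.e., the inequality R/a ≤ ((n-3+2√2)/2)/(2(1-cos(π/n))) holds strictly. -/
open Finset Real Matrix

/-- The Randić index of a finite simple graph:
`R(G) = ∑_{uv ∈ E(G)} 1/√(d(u)·d(v))`. -/
noncomputable def randicIndex {V : Type*} [Fintype V] (G : SimpleGraph V) : ℝ :=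
  letI : DecidableRel G.Adj := Classical.decRel _
  ∑ e ∈ G.edgeFinset,
    Sym2.lift ⟨fun u v => 1 / Real.sqrt ((G.degree u : ℝ) * (G.degree v : ℝ)),
      fun u v => by simp [mul_comm]⟩ e

/-- The algebraic connectivity of a graph on `Fin n`: the second smallest eigenvalue
of the Laplacian matrix, characterized (via Courant–Fischer, since the all-ones vector
is an eigenvector of the smallest eigenvalue `0`) as the infimum of the Rayleigh
quotient over nonzero vectors orthogonal to the all-ones vector. -/
noncomputable def algebraicConnectivity {n : ℕ} (G : SimpleGraph (Fin n)) : ℝ :=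
  letI : DecidableRel G.Adj := Classical.decRel _
  sInf {r : ℝ | ∃ x : Fin n → ℝ, x ≠ 0 ∧ (∑ i, x i) = 0 ∧
    r = (x ⬝ᵥ ((G.lapMatrix ℝ).mulVec x)) / (x ⬝ᵥ x)}

/-- The edge connectivity of a graph: the least number of edges whose deletion
disconnects the graph. -/
noncomputable def edgeConnectivity {V : Type*} [Fintype V] (G : SimpleGraph V) : ℕ :=
  sInf {k : ℕ | ∃ s : Set (Sym2 V), s ⊆ G.edgeSet ∧ s.ncard = k ∧
    ¬ (G.deleteEdges s).Connected}

/-- The star `K_{1,n-1}` on vertex set `Fin n`: vertex `0` is adjacent to all others. -/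
def starGraph (n : ℕ) : SimpleGraph (Fin n) where
  Adj i j := i ≠ j ∧ ((i : ℕ) = 0 ∨ (j : ℕ) = 0)
  symm := ⟨fun _ _ h => ⟨h.1.symm, h.2.symm⟩⟩
  loopless := ⟨fun _ h => h.1 rfl⟩

/-!
Every edge satisfies `1/√(d(u)d(v)) ≤ (1/d(u) + 1/d(v))/2`, and summing over edges gives
`R(G) ≤ n/2`. For the algebraic connectivity, list the entries of a test vector `x ⊥ 𝟏` in
increasing order as `z₀ ≤ ⋯ ≤ z_{n-1}`. An edge `uv` contributes
`(x u - x v)² ≥ ∑ (z_{k+1} - z_k)²`, summed over the gaps `k` between its endpoints, and every gap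
is crossed by the at least `κ'` edges of the cut it defines; hence `xᵀLx ≥ κ' ∑ (z_{k+1} - z_k)²`.
The discrete Poincaré inequality `6 ∑ z_k² ≤ (n² - 1) ∑ (z_{k+1} - z_k)²` for `∑ z_k = 0` (Abel
summation and Cauchy–Schwarz) then gives `a(G) ≥ 6κ'/(n² - 1) ≥ 12/(n² - 1)`, so
`R/a ≤ n(n² - 1)/24`, and this is below the bound because `2(1 - cos(π/n)) ≤ π²/n²`.
-/

theorem sum_range_succ_mul_sub (m : ℕ) :
    ∑ j ∈ range m, ((j : ℝ) + 1) * (m - j) = m * (m + 1) * (m + 2) / 6 := by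
  have gauss : ∀ m : ℕ, ∑ j ∈ range m, ((j : ℝ) + 1) = m * (m + 1) / 2 := by
    intro m
    induction m with
    | zero => simp
    | succ m ih => rw [sum_range_succ, ih]; push_cast; ring
  induction m with
  | zero => simp
  | succ m ih =>
    have hshift : ∑ j ∈ range m, ((j : ℝ) + 1) * (m + 1 - j)
        = ∑ j ∈ range m, ((j : ℝ) + 1) * (m - j) + ∑ j ∈ range m, ((j : ℝ) + 1) := by
      rw [← sum_add_distrib]; exact sum_congr rfl fun j _ => by ring
    rw [sum_range_succ]
    push_cast
    rw [hshift, ih, gauss]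
    ring

theorem sum_sq_eq_neg_sum_partialSum_mul_sub (z : ℕ → ℝ) {n : ℕ} (hz : ∑ k ∈ range n, z k = 0) :
    ∑ k ∈ range n, z k ^ 2
      = -∑ j ∈ range (n - 1), (∑ k ∈ range (j + 1), z k) * (z (j + 1) - z j) := by
  have h := sum_range_by_parts z z n
  simp only [smul_eq_mul, hz, mul_zero, zero_sub] at h
  simp only [sq, h, mul_comm]

theorem sq_sum_range_le_of_sum_eq_zero (z : ℕ → ℝ) {m n : ℕ} (hmn : m ≤ n)
    (hz : ∑ k ∈ range n, z k = 0) :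
    n * (∑ k ∈ range m, z k) ^ 2 ≤ m * (n - m) * ∑ k ∈ range n, z k ^ 2 := by
  have hsplit := sum_range_add_sum_Ico z hmn
  have hsplit2 := sum_range_add_sum_Ico (fun k => z k ^ 2) hmn
  have hlow := sq_sum_le_card_mul_sum_sq (s := range m) (f := z)
  have hhigh := sq_sum_le_card_mul_sum_sq (s := Ico m n) (f := z)
  rw [card_range] at hlow
  rw [Nat.card_Ico, Nat.cast_sub hmn] at hhigh
  have hm : (m : ℝ) ≤ n := by exact_mod_cast hmn
  have hA : ∑ k ∈ Ico m n, z k = -∑ k ∈ range m, z k := by linarith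
  rw [hA, neg_sq] at hhigh
  rw [← hsplit2]
  nlinarith [mul_le_mul_of_nonneg_left hlow (sub_nonneg.2 hm),
    mul_le_mul_of_nonneg_left hhigh (m.cast_nonneg (α := ℝ))]

theorem six_mul_sum_sq_le_of_sum_eq_zero (z : ℕ → ℝ) (n : ℕ) (hz : ∑ k ∈ range n, z k = 0) :
    6 * ∑ k ∈ range n, z k ^ 2 ≤ ((n : ℝ) ^ 2 - 1) * ∑ j ∈ range (n - 1), (z (j + 1) - z j) ^ 2 := by
  obtain _ | m := n
  · simp
  rw [Nat.add_sub_cancel]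
  push_cast
  set S := ∑ k ∈ range (m + 1), z k ^ 2
  set Sg := ∑ j ∈ range m, (z (j + 1) - z j) ^ 2
  set T := fun j => ∑ k ∈ range (j + 1), z k
  have hS : 0 ≤ S := sum_nonneg fun _ _ => sq_nonneg _
  have hSg : 0 ≤ Sg := sum_nonneg fun _ _ => sq_nonneg _
  have habel : S = -∑ j ∈ range m, T j * (z (j + 1) - z j) :=
    sum_sq_eq_neg_sum_partialSum_mul_sub z hz
  have hT : (m + 1) * ∑ j ∈ range m, T j ^ 2 ≤ m * (m + 1) * (m + 2) / 6 * S := by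
    rw [← sum_range_succ_mul_sub, mul_sum, sum_mul]
    refine sum_le_sum fun j hj => ?_
    have := sq_sum_range_le_of_sum_eq_zero z (m := j + 1) (by have := mem_range.1 hj; omega) hz
    push_cast at this ⊢
    linarith
  have hcs : S ^ 2 ≤ (∑ j ∈ range m, T j ^ 2) * Sg := by
    rw [habel, neg_sq]
    exact sum_mul_sq_le_sq_mul_sq _ _ _
  rcases hS.eq_or_lt with h0 | hpos
  · rw [← h0, mul_zero]; exact mul_nonneg (by nlinarith) hSg
  have : (m + 1 : ℝ) * S ^ 2 ≤ (m + 1) * (m * (m + 2) / 6 * S * Sg) := by nlinarith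
  have : S ^ 2 ≤ m * (m + 2) / 6 * S * Sg := le_of_mul_le_mul_left this (by positivity)
  nlinarith

theorem sum_sq_sub_le_sq_sub_of_monotone {z : ℕ → ℝ} (hz : Monotone z) {a b : ℕ}
    (hab : a ≤ b) : ∑ k ∈ Ico a b, (z (k + 1) - z k) ^ 2 ≤ (z b - z a) ^ 2 := by
  rw [← sum_Ico_sub z hab]
  exact sum_sq_le_sq_sum_of_nonneg fun k _ => sub_nonneg.2 (hz k.le_succ)

namespace SimpleGraph

variable {V : Type*} (G : SimpleGraph V)

def cutEdges (S : Set V) : Set (Sym2 V) := {e ∈ G.edgeSet | ∃ a ∈ S, ∃ b ∉ S, e = s(a, b)}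

theorem not_connected_deleteEdges_cutEdges {S : Set V} {a b : V} (ha : a ∈ S) (hb : b ∉ S) :
    ¬ (G.deleteEdges (G.cutEdges S)).Connected := fun h => by
  obtain ⟨p⟩ := h.preconnected a b
  obtain ⟨d, -, hd₁, hd₂⟩ := p.exists_boundary_dart S ha hb
  have hadj := (deleteEdges_adj.1 d.adj)
  exact hadj.2 ⟨hadj.1, d.fst, hd₁, d.snd, hd₂, rfl⟩

theorem edgeConnectivity_le_ncard_cutEdges [Fintype V] {S : Set V} {a b : V} (ha : a ∈ S)
    (hb : b ∉ S) : edgeConnectivity G ≤ (G.cutEdges S).ncard :=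
  Nat.sInf_le ⟨_, fun _ he => he.1, rfl, G.not_connected_deleteEdges_cutEdges ha hb⟩

open Classical in
theorem sum_sq_sub_cutEdges_le {z : ℕ → ℝ} (hz : Monotone z) (r : V → ℕ) (N : ℕ) (u v : V) :
    ∑ k ∈ range N, (if s(u, v) ∈ G.cutEdges {w | r w ≤ k} then (z (k + 1) - z k) ^ 2 else 0)
      ≤ (z (r u) - z (r v)) ^ 2 := by
  have hcross : ∀ k, s(u, v) ∈ G.cutEdges {w | r w ≤ k} →
      k ∈ Ico (min (r u) (r v)) (max (r u) (r v)) := by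
    rintro k ⟨-, a, ha, b, hb, hab⟩
    simp only [Set.mem_ofPred_eq, not_le] at ha hb
    rw [Sym2.eq_iff] at hab
    rw [mem_Ico]
    rcases hab with ⟨rfl, rfl⟩ | ⟨rfl, rfl⟩ <;> omega
  rw [← sum_filter]
  calc _ ≤ ∑ k ∈ Ico (min (r u) (r v)) (max (r u) (r v)), (z (k + 1) - z k) ^ 2 :=
        sum_le_sum_of_subset_of_nonneg (fun k hk => hcross k (mem_filter.1 hk).2)
          fun _ _ _ => sq_nonneg _
    _ ≤ (z (max (r u) (r v)) - z (min (r u) (r v))) ^ 2 :=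
        sum_sq_sub_le_sq_sub_of_monotone hz min_le_max
    _ = (z (r u) - z (r v)) ^ 2 := by
        rcases le_total (r u) (r v) with h | h
        · rw [min_eq_left h, max_eq_right h]; ring
        · rw [min_eq_right h, max_eq_left h]

variable [Fintype V] [DecidableRel G.Adj]

theorem sum_darts_eq_sum_sum_adj {M : Type*} [AddCommMonoid M] (f : V → V → M) :
    ∑ d : G.Dart, f d.fst d.snd = ∑ u, ∑ v, if G.Adj u v then f u v else 0 := by
  rw [← sum_product' (f := fun u v => if G.Adj u v then f u v else 0), univ_product_univ,
    ← sum_filter]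
  exact sum_bij' (fun d _ ↦ (d.fst, d.snd)) (fun p h ↦ ⟨p, (mem_filter.1 h).2⟩)
    (by simp) (by simp) (by simp) (by simp) (by simp)

theorem sum_darts_edge_eq_two_smul_sum_edgeFinset [DecidableEq V] {M : Type*} [AddCommMonoid M]
    (F : Sym2 V → M) : ∑ d : G.Dart, F d.edge = 2 • ∑ e ∈ G.edgeFinset, F e := by
  rw [← sum_fiberwise_of_maps_to (g := Dart.edge) (t := G.edgeFinset) (by simp), smul_sum]
  refine sum_congr rfl fun e he => ?_
  rw [sum_congr rfl fun d hd => congrArg F (mem_filter.1 hd).2, sum_const,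
    G.dart_edge_fiber_card e (mem_edgeFinset.1 he)]

theorem sum_sum_adj_eq_two_mul_sum_edgeFinset (f : V → V → ℝ) (hf : ∀ u v, f u v = f v u) :
    ∑ u, ∑ v, (if G.Adj u v then f u v else 0) = 2 * ∑ e ∈ G.edgeFinset, Sym2.lift ⟨f, hf⟩ e := by
  classical
  have h := G.sum_darts_edge_eq_two_smul_sum_edgeFinset (Sym2.lift ⟨f, hf⟩)
  rw [nsmul_eq_mul, Nat.cast_ofNat] at h
  rw [← sum_darts_eq_sum_sum_adj, ← h]
  rfl

theorem sum_edgeFinset_lift_add (h : V → ℝ) :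
    ∑ e ∈ G.edgeFinset, Sym2.lift ⟨fun u v => h u + h v, fun _ _ => add_comm _ _⟩ e
      = ∑ v, G.degree v * h v := by
  have hsum := G.sum_sum_adj_eq_two_mul_sum_edgeFinset (fun u v => h u + h v)
    (fun _ _ => add_comm _ _)
  have hrow : ∀ u, ∑ v, (if G.Adj u v then h u else 0) = G.degree u * h u := by
    intro u
    rw [G.degree_eq_sum_if_adj (R := ℝ), sum_mul]
    exact sum_congr rfl fun v _ => by split_ifs <;> simp
  have hcol : ∀ v, ∑ u, (if G.Adj u v then h v else 0) = G.degree v * h v := fun v => by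
    simp only [G.adj_comm _ v, hrow]
  simp only [ite_add_zero, sum_add_distrib] at hsum
  rw [sum_comm (f := fun u v => if G.Adj u v then h v else 0)] at hsum
  simp only [hrow, hcol] at hsum
  linarith

theorem dotProduct_lapMatrix_mulVec [DecidableEq V] (x : V → ℝ) :
    x ⬝ᵥ (G.lapMatrix ℝ *ᵥ x)
      = ∑ e ∈ G.edgeFinset, Sym2.lift ⟨fun u v => (x u - x v) ^ 2, fun _ _ => by ring⟩ e := by
  rw [← toLinearMap₂'_apply', lapMatrix_toLinearMap₂',
    G.sum_sum_adj_eq_two_mul_sum_edgeFinset (fun u v => (x u - x v) ^ 2) (fun _ _ => by ring)]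
  ring

theorem ncard_cutEdges (S : Set V) [DecidablePred (· ∈ G.cutEdges S)] :
    (G.cutEdges S).ncard = #{e ∈ G.edgeFinset | e ∈ G.cutEdges S} := by
  rw [← Set.ncard_coe_finset]
  congr 1
  ext e
  simp only [coe_filter, mem_edgeFinset, Set.mem_ofPred_eq]
  exact ⟨fun h => ⟨h.1, h⟩, And.right⟩

theorem edgeConnectivity_mul_sum_sq_le (x : V → ℝ) {z : ℕ → ℝ} (hz : Monotone z) (r : V → ℕ)
    (hxz : ∀ v, x v = z (r v)) (N : ℕ) (hcut : ∀ k < N, (∃ u, r u ≤ k) ∧ ∃ v, k < r v) :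
    edgeConnectivity G * ∑ k ∈ range N, (z (k + 1) - z k) ^ 2
      ≤ ∑ e ∈ G.edgeFinset, Sym2.lift ⟨fun u v => (x u - x v) ^ 2, fun _ _ => by ring⟩ e := by
  classical
  calc _ = ∑ k ∈ range N, (edgeConnectivity G : ℝ) * (z (k + 1) - z k) ^ 2 := mul_sum _ _ _
    _ ≤ ∑ k ∈ range N, ∑ e ∈ G.edgeFinset,
          if e ∈ G.cutEdges {w | r w ≤ k} then (z (k + 1) - z k) ^ 2 else 0 := by
        refine sum_le_sum fun k hk => ?_
        obtain ⟨⟨a, ha⟩, ⟨b, hb⟩⟩ := hcut k (mem_range.1 hk)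
        have hκ := G.edgeConnectivity_le_ncard_cutEdges (S := {w | r w ≤ k})
          (show a ∈ {w | r w ≤ k} from ha) (show b ∉ {w | r w ≤ k} from not_le.2 hb)
        rw [← sum_filter, sum_const, nsmul_eq_mul, ← G.ncard_cutEdges]
        gcongr
    _ = ∑ e ∈ G.edgeFinset, ∑ k ∈ range N,
          if e ∈ G.cutEdges {w | r w ≤ k} then (z (k + 1) - z k) ^ 2 else 0 := sum_comm
    _ ≤ _ := sum_le_sum fun e _ => e.ind fun u v => by
        simpa only [Sym2.lift_mk, hxz] using G.sum_sq_sub_cutEdges_le hz r N u v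

end SimpleGraph

theorem SimpleGraph.six_mul_edgeConnectivity_mul_sum_sq_le {n : ℕ} (G : SimpleGraph (Fin n))
    [DecidableRel G.Adj] (x : Fin n → ℝ) (hx : ∑ i, x i = 0) :
    6 * edgeConnectivity G * ∑ i, x i ^ 2 ≤ ((n : ℝ) ^ 2 - 1) * (x ⬝ᵥ (G.lapMatrix ℝ *ᵥ x)) := by
  obtain _ | m := n
  · simp
  set σ := Tuple.sort x
  set z : ℕ → ℝ := fun k => x (σ ⟨min k m, by omega⟩)
  have hz : Monotone z := fun k l hkl =>
    Tuple.monotone_sort x (Fin.mk_le_mk.2 (min_le_min_right m hkl))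
  have hzσ : ∀ i : Fin (m + 1), z i = x (σ i) := fun i => by
    simp only [z, min_eq_left (Nat.le_of_lt_succ i.isLt)]
  have hxz : ∀ v, x v = z (σ.symm v) := fun v => by rw [hzσ, σ.apply_symm_apply]
  have hcut : ∀ k < m, (∃ u, (σ.symm u : ℕ) ≤ k) ∧ ∃ v, k < σ.symm v :=
    fun k hk => ⟨⟨σ 0, by simp⟩, ⟨σ (Fin.last m), by simpa using hk⟩⟩
  have hsum : ∑ k ∈ range (m + 1), z k = 0 := by
    rw [← Fin.sum_univ_eq_sum_range, ← hx, ← Equiv.sum_comp σ x]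
    exact sum_congr rfl fun i _ => hzσ i
  have hsq : ∑ k ∈ range (m + 1), z k ^ 2 = ∑ i, x i ^ 2 := by
    rw [← Fin.sum_univ_eq_sum_range (fun k => z k ^ 2), ← Equiv.sum_comp σ (fun i => x i ^ 2)]
    exact sum_congr rfl fun i _ => by rw [hzσ]
  have hwirt := six_mul_sum_sq_le_of_sum_eq_zero z (m + 1) hsum
  have hcutsum := G.edgeConnectivity_mul_sum_sq_le x hz (fun v => σ.symm v) hxz m hcut
  rw [hsq, Nat.add_sub_cancel] at hwirt
  rw [G.dotProduct_lapMatrix_mulVec]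
  have hκ : (0 : ℝ) ≤ edgeConnectivity G := Nat.cast_nonneg _
  have hm : (0 : ℝ) ≤ ((m + 1 : ℕ) : ℝ) ^ 2 - 1 := by push_cast; nlinarith [m.cast_nonneg (α := ℝ)]
  calc 6 * (edgeConnectivity G : ℝ) * ∑ i, x i ^ 2
      = edgeConnectivity G * (6 * ∑ i, x i ^ 2) := by ring
    _ ≤ edgeConnectivity G * ((((m + 1 : ℕ) : ℝ) ^ 2 - 1) *
          ∑ j ∈ range m, (z (j + 1) - z j) ^ 2) :=
        mul_le_mul_of_nonneg_left hwirt hκ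
    _ = (((m + 1 : ℕ) : ℝ) ^ 2 - 1) *
          (edgeConnectivity G * ∑ j ∈ range m, (z (j + 1) - z j) ^ 2) := by ring
    _ ≤ _ := mul_le_mul_of_nonneg_left hcutsum hm

theorem le_algebraicConnectivity {n : ℕ} (hn : 2 ≤ n) (G : SimpleGraph (Fin n)) :
    6 * edgeConnectivity G / ((n : ℝ) ^ 2 - 1) ≤ algebraicConnectivity G := by
  have hn' : (0 : ℝ) < (n : ℝ) ^ 2 - 1 := by
    have : (2 : ℝ) ≤ n := by exact_mod_cast hn
    nlinarith
  refine le_csInf ?_ ?_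
  · set a : Fin n := ⟨0, by omega⟩
    set b : Fin n := ⟨1, by omega⟩
    have hab : a ≠ b := by simp [a, b, Fin.ext_iff]
    refine ⟨_, Pi.single a 1 - Pi.single b 1, fun h => ?_, ?_, rfl⟩
    · simpa [hab] using congrFun h a
    · simp [sum_sub_distrib]
  · rintro _ ⟨x, hx0, hx, rfl⟩
    have hxx : x ⬝ᵥ x = ∑ i, x i ^ 2 := by simp only [dotProduct, sq]
    have hpos : 0 < x ⬝ᵥ x := lt_of_le_of_ne (hxx ▸ by positivity)
      (Ne.symm (mt dotProduct_self_eq_zero.1 hx0))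
    rw [div_le_div_iff₀ hn' hpos, hxx]
    have h := @SimpleGraph.six_mul_edgeConnectivity_mul_sum_sq_le n G (Classical.decRel _) x hx
    linarith

theorem Real.one_div_sqrt_mul_le {a b : ℝ} (ha : 0 ≤ a) (hb : 0 ≤ b) :
    1 / √(a * b) ≤ (1 / a + 1 / b) / 2 := by
  have h := two_mul_le_add_sq √(1 / a) √(1 / b)
  rw [sq_sqrt (by positivity), sq_sqrt (by positivity), mul_assoc, ← sqrt_mul (by positivity),
    one_div_mul_one_div, one_div, sqrt_inv] at h
  rw [one_div]
  linarith

theorem randicIndex_le_card_div_two {V : Type*} [Fintype V] (G : SimpleGraph V) :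
    randicIndex G ≤ Fintype.card V / 2 := by
  classical
  rw [randicIndex]
  set h : V → ℝ := fun v => 1 / (2 * G.degree v)
  calc _ ≤ ∑ e ∈ G.edgeFinset, Sym2.lift ⟨fun u v => h u + h v, fun _ _ => add_comm _ _⟩ e := by
        refine sum_le_sum fun e _ => e.ind fun u v => ?_
        have := Real.one_div_sqrt_mul_le (G.degree u).cast_nonneg (G.degree v).cast_nonneg
        simp only [Sym2.lift_mk, h]
        refine this.trans (le_of_eq ?_)
        ring
    _ = ∑ v, G.degree v * h v := G.sum_edgeFinset_lift_add h
    _ ≤ ∑ _v : V, (1 / 2 : ℝ) := sum_le_sum fun v _ => by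
        rcases (G.degree v).eq_zero_or_pos with h0 | hpos
        · simp [h0]
        · simp only [h]; field_simp; rfl
    _ = Fintype.card V / 2 := by simp [div_eq_mul_inv]

theorem Real.two_mul_one_sub_cos_le_sq (x : ℝ) : 2 * (1 - cos x) ≤ x ^ 2 := by
  linarith [one_sub_sq_div_two_le_cos (x := x)]

theorem mul_sq_sub_one_div_lt {n : ℕ} (hn : 3 ≤ n) :
    (n : ℝ) * (n ^ 2 - 1) / 24 < ((n - 3 + 2 * √2) / 2) / (2 * (1 - cos (π / n))) := by
  have hn : (3 : ℝ) ≤ n := by exact_mod_cast hn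
  have hx : 0 < π / n := by positivity
  have hD : 0 < 2 * (1 - cos (π / n)) := by
    have := cos_lt_cos_of_nonneg_of_le_pi le_rfl (div_le_self pi_pos.le (by linarith)) hx
    rw [cos_zero] at this
    linarith
  have hDle : 2 * (1 - cos (π / n)) * n ^ 2 ≤ π ^ 2 := by
    have := two_mul_one_sub_cos_le_sq (π / n)
    rwa [div_pow, le_div_iff₀ (by positivity)] at this
  have hpi : π ^ 2 < 9.93 := by nlinarith [pi_lt_d2, pi_pos]
  have hsqrt2 : 1.41 < √2 := by rw [lt_sqrt (by norm_num)]; norm_num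
  have hkey : (n ^ 2 - 1) * π ^ 2 < 12 * n * (n - 3 + 2 * √2) := by nlinarith
  have hmul : (n : ℝ) * (n * (n ^ 2 - 1) / 24 * (2 * (1 - cos (π / n))))
      < n * ((n - 3 + 2 * √2) / 2) := by
    nlinarith [mul_le_mul_of_nonneg_left hDle (by nlinarith : (0 : ℝ) ≤ n ^ 2 - 1)]
  rw [lt_div_iff₀ hD]
  exact lt_of_mul_lt_mul_left hmul (by positivity)

theorem randic_over_algConn_lt_of_edgeConnectivity_ge_two_general
    {n : ℕ} (hn : 3 ≤ n) (G : SimpleGraph (Fin n))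
    (hκ : 2 ≤ edgeConnectivity G) :
    randicIndex G / algebraicConnectivity G <
      (((n : ℝ) - 3 + 2 * Real.sqrt 2) / 2) / (2 * (1 - Real.cos (Real.pi / n))) := by
  have hn' : (0 : ℝ) < (n : ℝ) ^ 2 - 1 := by
    have : (3 : ℝ) ≤ n := by exact_mod_cast hn
    nlinarith
  have hR : randicIndex G ≤ n / 2 := by simpa using randicIndex_le_card_div_two G
  have ha : 12 / ((n : ℝ) ^ 2 - 1) ≤ algebraicConnectivity G := by
    refine le_trans ?_ (le_algebraicConnectivity (by omega) G)
    gcongr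
    exact_mod_cast (by omega : 12 ≤ 6 * edgeConnectivity G)
  calc randicIndex G / algebraicConnectivity G ≤ (n / 2) / (12 / ((n : ℝ) ^ 2 - 1)) :=
        div_le_div₀ (by positivity) hR (by positivity) ha
    _ = n * (n ^ 2 - 1) / 24 := by field_simp; ring
    _ < _ := mul_sq_sub_one_div_lt hn

theorem randic_over_algConn_lt_of_edgeConnectivity_ge_two
    {n : ℕ} (hn : 3 ≤ n) (G : SimpleGraph (Fin n)) (hG : G.Connected)
    (hκ : 2 ≤ edgeConnectivity G) :
    randicIndex G / algebraicConnectivity G <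
      (((n : ℝ) - 3 + 2 * Real.sqrt 2) / 2) / (2 * (1 - Real.cos (Real.pi / n))) :=
  randic_over_algConn_lt_of_edgeConnectivity_ge_two_general hn G hκ
end

section
/- Let G be a connected simple graph on n ≥ 3 vertices with Randić index R, algebraic connectivity a, and minimum degree δ. If δ ≥ n/2, then R/a ≤ ((n - 3 + 2√2)/2) / (2(1 - cos(π/n))). -/
open Finset Real Matrix

/-! Every Randić term is at most `1/δ`, so `R ≤ |E|/δ ≤ (n(n-1)/2)/(n/2) = n - 1`.
For `x ⊥ 𝟙` the Laplacian quadratic forms of `G` and `Gᶜ` add up to `n‖x‖²`, and the one of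
`Gᶜ` is at most `2Δ(Gᶜ)‖x‖² = 2(n - 1 - δ)‖x‖²`; hence `a ≥ 2δ - n + 2 ≥ 2` and
`R/a ≤ (n-1)/2`. Finally `1 - cos(π/n) ≤ π²/(2n²)` reduces the remaining inequality to
`(n-1)π² ≤ n²(n-3+2√2)`. -/

theorem sum_sum_sq_sub_of_sum_eq_zero {V : Type*} [Fintype V] (x : V → ℝ) (hx : ∑ i, x i = 0) :
    ∑ i, ∑ j, (x i - x j) ^ 2 = 2 * Fintype.card V * ∑ i, x i ^ 2 := by
  simp_rw [sub_sq, sum_add_distrib, sum_sub_distrib, mul_assoc, ← mul_sum, ← sum_mul, hx]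
  simp only [sum_const, card_univ, nsmul_eq_mul, ← mul_sum, mul_zero, sub_zero]
  ring

namespace SimpleGraph

variable {V : Type*} [Fintype V]

theorem randicIndex_le_of_le_degree (G : SimpleGraph V) [DecidableRel G.Adj] {d : ℝ}
    (hd : 0 < d) (h : ∀ v, d ≤ G.degree v) : randicIndex G ≤ #G.edgeFinset / d := by
  obtain rfl : ‹DecidableRel G.Adj› = Classical.decRel _ := Subsingleton.elim _ _
  unfold randicIndex
  rw [div_eq_mul_one_div, ← nsmul_eq_mul]
  refine sum_le_card_nsmul _ _ _ fun e _ => ?_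
  induction e using Sym2.ind with
  | _ u v =>
    rw [Sym2.lift_mk]
    refine one_div_le_one_div_of_le hd ((Real.le_sqrt hd.le (by positivity)).mpr ?_)
    rw [sq]
    exact mul_le_mul (h u) (h v) hd.le (hd.le.trans (h u))

theorem randicIndex_le_card_sub_one [Nonempty V] (G : SimpleGraph V) [DecidableRel G.Adj]
    (hδ : (Fintype.card V : ℝ) / 2 ≤ G.minDegree) : randicIndex G ≤ Fintype.card V - 1 := by
  have hcard : (0 : ℝ) < Fintype.card V := by exact_mod_cast Fintype.card_pos
  have hedges : (#G.edgeFinset : ℝ) ≤ Fintype.card V * (Fintype.card V - 1) / 2 := by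
    rw [← Nat.cast_choose_two]
    exact_mod_cast G.card_edgeFinset_le_card_choose_two
  calc randicIndex G ≤ #G.edgeFinset / ((Fintype.card V : ℝ) / 2) :=
        G.randicIndex_le_of_le_degree (by positivity)
          fun v => hδ.trans (by exact_mod_cast G.minDegree_le_degree v)
    _ ≤ Fintype.card V * (Fintype.card V - 1) / 2 / ((Fintype.card V : ℝ) / 2) := by gcongr
    _ = Fintype.card V - 1 := by field_simp

theorem sum_ite_adj_eq_degree_mul (G : SimpleGraph V) [DecidableRel G.Adj] (i : V) (c : ℝ) :
    ∑ j, (if G.Adj i j then c else 0) = G.degree i * c := by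
  simp_rw [G.degree_eq_sum_if_adj (R := ℝ) i, sum_mul, ite_mul, one_mul, zero_mul]

theorem sum_adj_sq_sub_le (G : SimpleGraph V) [DecidableRel G.Adj] (x : V → ℝ) :
    ∑ i, ∑ j, (if G.Adj i j then (x i - x j) ^ 2 else 0) ≤
      4 * ∑ i, G.degree i * x i ^ 2 := by
  have hswap : ∑ i, ∑ j, (if G.Adj i j then 2 * x j ^ 2 else 0) =
      ∑ i, ∑ j, (if G.Adj i j then 2 * x i ^ 2 else 0) := by
    rw [sum_comm]
    simp_rw [G.adj_comm]
  calc ∑ i, ∑ j, (if G.Adj i j then (x i - x j) ^ 2 else 0)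
      ≤ ∑ i, ∑ j, ((if G.Adj i j then 2 * x i ^ 2 else 0) +
          (if G.Adj i j then 2 * x j ^ 2 else 0)) := by
        gcongr with i _ j _
        split_ifs
        · nlinarith [sq_nonneg (x i + x j)]
        · simp
    _ = 4 * ∑ i, G.degree i * x i ^ 2 := by
        simp_rw [sum_add_distrib, hswap, G.sum_ite_adj_eq_degree_mul, ← sum_add_distrib, mul_sum]
        exact sum_congr rfl fun i _ => by ring

theorem sum_adj_sq_sub_add_sum_compl_adj_sq_sub [DecidableEq V] (G : SimpleGraph V)
    [DecidableRel G.Adj] (x : V → ℝ) :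
    ∑ i, ∑ j, (if G.Adj i j then (x i - x j) ^ 2 else 0) +
      ∑ i, ∑ j, (if Gᶜ.Adj i j then (x i - x j) ^ 2 else 0) =
      ∑ i, ∑ j, (x i - x j) ^ 2 := by
  simp_rw [← sum_add_distrib]
  refine sum_congr rfl fun i _ => sum_congr rfl fun j _ => ?_
  obtain rfl | hij := eq_or_ne i j
  · simp
  · by_cases h : G.Adj i j <;> simp [h, hij]

theorem le_dotProduct_lapMatrix_mulVec_of_sum_eq_zero [DecidableEq V] (G : SimpleGraph V) [DecidableRel G.Adj]
    (x : V → ℝ) (hx : ∑ i, x i = 0) :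
    (2 * G.minDegree - Fintype.card V + 2 : ℝ) * (x ⬝ᵥ x) ≤ x ⬝ᵥ (G.lapMatrix ℝ *ᵥ x) := by
  have hcompl (i : V) : (Gᶜ.degree i : ℝ) ≤ Fintype.card V - 1 - G.minDegree := by
    have hsum : Gᶜ.degree i + G.degree i + 1 = Fintype.card V := by
      have := G.degree_lt_card_verts i
      rw [degree_compl]
      omega
    have hmin : (G.minDegree : ℝ) ≤ G.degree i := by exact_mod_cast G.minDegree_le_degree i
    have : (Gᶜ.degree i : ℝ) + G.degree i + 1 = Fintype.card V := by exact_mod_cast hsum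
    linarith
  have hcomplForm : ∑ i, ∑ j, (if Gᶜ.Adj i j then (x i - x j) ^ 2 else 0) ≤
      4 * ((Fintype.card V - 1 - G.minDegree) * ∑ i, x i ^ 2) := by
    refine (Gᶜ.sum_adj_sq_sub_le x).trans ?_
    gcongr 4 * ?_
    rw [mul_sum]
    gcongr with i
    exact hcompl i
  have hform := G.sum_adj_sq_sub_add_sum_compl_adj_sq_sub x
  rw [sum_sum_sq_sub_of_sum_eq_zero x hx] at hform
  rw [← toLinearMap₂'_apply', lapMatrix_toLinearMap₂', dotProduct]
  simp_rw [← sq]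
  linarith

end SimpleGraph

theorem le_algebraicConnectivity_s4 {n : ℕ} (hn : 2 ≤ n) (G : SimpleGraph (Fin n))
    [DecidableRel G.Adj] {c : ℝ}
    (h : ∀ x : Fin n → ℝ, ∑ i, x i = 0 → c * (x ⬝ᵥ x) ≤ x ⬝ᵥ (G.lapMatrix ℝ *ᵥ x)) :
    c ≤ algebraicConnectivity G := by
  obtain rfl : ‹DecidableRel G.Adj› = Classical.decRel _ := Subsingleton.elim _ _
  refine le_csInf ⟨_, Pi.single ⟨0, by omega⟩ 1 - Pi.single ⟨1, by omega⟩ 1, ?_, ?_, rfl⟩ ?_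
  · exact fun h => by simpa [Pi.single_apply, Fin.ext_iff] using congrFun h ⟨0, by omega⟩
  · simp [sum_sub_distrib]
  · rintro r ⟨x, hx0, hxs, rfl⟩
    have hpos : 0 < x ⬝ᵥ x := lt_of_le_of_ne (Fintype.sum_nonneg fun i => mul_self_nonneg (x i))
      (Ne.symm (dotProduct_self_eq_zero.not.mpr hx0))
    rw [le_div_iff₀ hpos]
    exact h x hxs

theorem two_mul_minDegree_sub_add_two_le_algebraicConnectivity {n : ℕ} (hn : 2 ≤ n)
    (G : SimpleGraph (Fin n)) [DecidableRel G.Adj] :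
    2 * G.minDegree - n + 2 ≤ algebraicConnectivity G :=
  le_algebraicConnectivity_s4 hn G fun x hx => by
    simpa using G.le_dotProduct_lapMatrix_mulVec_of_sum_eq_zero x hx

theorem sub_one_div_two_le_sqrt_two_div_one_sub_cos {n : ℕ} (hn : 3 ≤ n) :
    ((n : ℝ) - 1) / 2 ≤ (((n : ℝ) - 3 + 2 * √2) / 2) / (2 * (1 - cos (π / n))) := by
  have hn' : (3 : ℝ) ≤ n := by exact_mod_cast hn
  have hcos_lt : cos (π / n) < 1 := by
    simpa using cos_lt_cos_of_nonneg_of_le_pi le_rfl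
      (div_le_self pi_pos.le (by linarith)) (by positivity)
  have hcos_le : 1 - cos (π / n) ≤ (π / n) ^ 2 / 2 := by
    linarith [one_sub_sq_div_two_le_cos (x := π / n)]
  -- `π² < 10` and `2√2 > 2.8` leave `10(n - 1) ≤ 2.8n²`, a quadratic with negative discriminant.
  have hpoly : ((n : ℝ) - 1) * π ^ 2 ≤ ((n : ℝ) - 3 + 2 * √2) * (n : ℝ) ^ 2 := by
    have hπ : π ^ 2 < 10 := by nlinarith [pi_lt_d2, pi_pos]
    have hsqrt : (1.4 : ℝ) ≤ √2 := by
      rw [le_sqrt (by norm_num) (by norm_num)]; norm_num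
    nlinarith [mul_le_mul_of_nonneg_left hsqrt (sq_nonneg (n : ℝ))]
  rw [le_div_iff₀ (by linarith)]
  calc ((n : ℝ) - 1) / 2 * (2 * (1 - cos (π / n)))
      = ((n : ℝ) - 1) * (1 - cos (π / n)) := by ring
    _ ≤ ((n : ℝ) - 1) * ((π / n) ^ 2 / 2) := by gcongr; linarith
    _ = ((n : ℝ) - 1) * π ^ 2 / (2 * (n : ℝ) ^ 2) := by field_simp
    _ ≤ ((n : ℝ) - 3 + 2 * √2) / 2 := by
        rw [div_le_div_iff₀ (by positivity) (by norm_num)]; nlinarith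

theorem randic_over_algConn_le_of_minDegree_large_general
    {n : ℕ} (hn : 3 ≤ n) (G : SimpleGraph (Fin n)) [DecidableRel G.Adj]
    (hδ : (n : ℝ) / 2 ≤ (G.minDegree : ℝ)) :
    randicIndex G / algebraicConnectivity G ≤
      (((n : ℝ) - 3 + 2 * Real.sqrt 2) / 2) / (2 * (1 - Real.cos (Real.pi / n))) := by
  have : Nonempty (Fin n) := ⟨⟨0, by omega⟩⟩
  have hR : randicIndex G ≤ n - 1 := by
    simpa using G.randicIndex_le_card_sub_one (by simpa using hδ)
  have ha : 2 ≤ algebraicConnectivity G := by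
    linarith [two_mul_minDegree_sub_add_two_le_algebraicConnectivity (by omega) G]
  calc randicIndex G / algebraicConnectivity G ≤ ((n : ℝ) - 1) / 2 :=
        div_le_div₀ (sub_nonneg.mpr (by exact_mod_cast (by omega : 1 ≤ n))) hR two_pos ha
    _ ≤ _ := sub_one_div_two_le_sqrt_two_div_one_sub_cos hn

theorem randic_over_algConn_le_of_minDegree_large
    {n : ℕ} (hn : 3 ≤ n) (G : SimpleGraph (Fin n)) [DecidableRel G.Adj] (hG : G.Connected)
    (hδ : (n : ℝ) / 2 ≤ (G.minDegree : ℝ)) :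
    randicIndex G / algebraicConnectivity G ≤
      (((n : ℝ) - 3 + 2 * Real.sqrt 2) / 2) / (2 * (1 - Real.cos (Real.pi / n))) :=
  randic_over_algConn_le_of_minDegree_large_general hn G hδ
end

section
/- Let G be a connected simple graph on n ≥ 3 vertices with Randić index R, algebraic connectivity a, and diameter D. If D ≤ (n-1)^{1/4}, then R·a ≥ (n - 3 + 2√2)(1 - cos(π/n)); that is, R·a is at least the value of the product of the Randić index and the algebraic connectivity of the path P_n. -/
open Finset Real Matrix

/-
Both factors are bounded separately. For the Randić index, every edge term satisfies
`1/√(d(u)d(v)) ≥ 1/√(d(u)(n-1))`, so `2R ≥ ∑ √d(v) / √(n-1)`; concavity of `√` on `[1, n-1]`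
together with `∑ d(v) ≥ 2(n-1)` (a connected graph has at least `n-1` edges) gives
`∑ √d(v) ≥ (n-1) + √(n-1)`, hence `R ≥ (√(n-1) + 1)/2`. For the algebraic connectivity, take
`x ⊥ 𝟙` with maximum `M` and minimum `m`: then `‖x‖² ≤ n(M-m)²/4`, while Cauchy–Schwarz along a
shortest path between the extremal vertices gives `(M-m)² ≤ D · xᵀLx`, hence `a ≥ 4/(nD)`.
So `R·a ≥ 2(√(n-1) + 1)/(nD)`, and `1 - cos(π/n) ≤ π²/(2n²)` with `D ≤ (n-1)^{1/4}` shows that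
this exceeds the path value.
-/

theorem add_sq_le_succ_mul_of_sq_le {a b L S : ℝ} (hL : 0 ≤ L) (hS : 0 ≤ S) (hb : b ^ 2 ≤ L * S) :
    (a + b) ^ 2 ≤ (L + 1) * (a ^ 2 + S) := by
  rcases hL.eq_or_lt with rfl | hL
  · have : b = 0 := by nlinarith
    subst this; nlinarith
  · -- `2ab ≤ L a² + b²/L ≤ L a² + S`
    have : 0 ≤ L * a ^ 2 + S - 2 * a * b :=
      nonneg_of_mul_nonneg_right (by nlinarith [sq_nonneg (L * a - b)]) hL
    nlinarith

-- The chord of the concave `√` between `1` and `N` lies below its graph.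
theorem sub_one_add_mul_sqrt_sub_one_le_mul_sqrt {N d : ℝ} (hd : 1 ≤ d) (hdN : d ≤ N) :
    (N - 1) + (d - 1) * (√N - 1) ≤ (N - 1) * √d := by
  have hd1 : 1 ≤ √d := Real.one_le_sqrt.mpr hd
  have hdN' : √d ≤ √N := Real.sqrt_le_sqrt hdN
  have hsq_d : √d ^ 2 = d := Real.sq_sqrt (by linarith)
  have hsq_N : √N ^ 2 = N := Real.sq_sqrt (by linarith)
  nlinarith [mul_nonneg (sub_nonneg.mpr hd1) (sub_nonneg.mpr hdN')]

theorem Finset.sum_sq_le_card_mul_sq_sub_div_four {ι : Type*} (s : Finset ι) {x : ι → ℝ}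
    {m M : ℝ} (hsum : ∑ i ∈ s, x i = 0) (hm : ∀ i ∈ s, m ≤ x i) (hM : ∀ i ∈ s, x i ≤ M) :
    ∑ i ∈ s, x i ^ 2 ≤ #s * (M - m) ^ 2 / 4 :=
  calc ∑ i ∈ s, x i ^ 2 ≤ ∑ i ∈ s, ((M + m) * x i - M * m) :=
        Finset.sum_le_sum fun i hi => by nlinarith [hm i hi, hM i hi]
    _ = -(#s * (M * m)) := by
        rw [Finset.sum_sub_distrib, ← Finset.mul_sum, hsum, Finset.sum_const, nsmul_eq_mul]; ring
    _ ≤ #s * (M - m) ^ 2 / 4 := by nlinarith [sq_nonneg (M + m), Nat.cast_nonneg (α := ℝ) #s]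

def sqDiff {V : Type*} (x : V → ℝ) : Sym2 V → ℝ :=
  Sym2.lift ⟨fun a b => (x a - x b) ^ 2, fun a b => by ring⟩

theorem sqDiff_nonneg {V : Type*} (x : V → ℝ) (e : Sym2 V) : 0 ≤ sqDiff x e := by
  induction e with
  | _ a b => exact sq_nonneg _

namespace SimpleGraph

variable {V : Type*} {G : SimpleGraph V}

theorem Walk.sq_sub_le_length_mul_sum_sqDiff (x : V → ℝ) {u v : V} (p : G.Walk u v) :
    (x u - x v) ^ 2 ≤ p.length * (p.edges.map (sqDiff x)).sum := by
  induction p with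
  | nil => simp
  | @cons a b c _ q ih =>
    have hsum : 0 ≤ (q.edges.map (sqDiff x)).sum :=
      List.sum_nonneg (by simpa using fun e _ => sqDiff_nonneg x e)
    rw [show x a - x c = (x a - x b) + (x b - x c) by ring]
    simpa [sqDiff] using add_sq_le_succ_mul_of_sq_le (a := x a - x b) (Nat.cast_nonneg _) hsum ih

variable [Fintype V] [DecidableRel G.Adj]

theorem two_mul_sum_edgeFinset_sym2Lift (f : V → V → ℝ) (hf : ∀ a b, f a b = f b a) :
    2 * ∑ e ∈ G.edgeFinset, Sym2.lift ⟨f, hf⟩ e =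
      ∑ i, ∑ j, if G.Adj i j then f i j else 0 := by
  classical
  have hdarts : ∑ d : G.Dart, f d.fst d.snd = ∑ i, ∑ j, if G.Adj i j then f i j else 0 := by
    rw [← Finset.sum_product', ← Finset.sum_filter]
    exact Finset.sum_bij' (fun d _ => d.toProd) (fun p hp => ⟨p, by simpa using hp⟩)
      (by simp [Dart.adj]) (by simp) (fun _ _ => rfl) (fun _ _ => rfl) (fun _ _ => rfl)
  have hfiber (e : Sym2 V) (he : e ∈ G.edgeFinset) :
      ∑ d : G.Dart with d.edge = e, f d.fst d.snd = 2 * Sym2.lift ⟨f, hf⟩ e := by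
    induction e with
    | _ u v =>
      let d : G.Dart := ⟨(u, v), by simpa using he⟩
      rw [show s(u, v) = d.edge from rfl, d.edge_fiber, Finset.sum_pair d.symm_ne.symm]
      simp [d, hf v u, two_mul]
  rw [← hdarts, ← Finset.sum_fiberwise_of_maps_to (g := Dart.edge) (t := G.edgeFinset)
    (by simp [Dart.edge_mem]), Finset.sum_congr rfl hfiber, Finset.mul_sum]

theorem dotProduct_lapMatrix_mulVec_eq_sum_sqDiff [DecidableEq V] (x : V → ℝ) :
    x ⬝ᵥ (G.lapMatrix ℝ *ᵥ x) = ∑ e ∈ G.edgeFinset, sqDiff x e := by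
  rw [← Matrix.toLinearMap₂'_apply', lapMatrix_toLinearMap₂',
    ← two_mul_sum_edgeFinset_sym2Lift _ fun a b => by ring, sqDiff]
  ring

theorem Connected.sq_sub_le_diam_mul_sum_sqDiff (hG : G.Connected) (x : V → ℝ) (u v : V) :
    (x u - x v) ^ 2 ≤ G.diam * ∑ e ∈ G.edgeFinset, sqDiff x e := by
  classical
  have : Nonempty V := hG.nonempty
  obtain ⟨p, hp, hlen⟩ := hG.exists_path_of_dist u v
  have hdiam : p.length ≤ G.diam := hlen ▸ dist_le_diam (connected_iff_ediam_ne_top.mp hG)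
  have hedges : (p.edges.map (sqDiff x)).sum ≤ ∑ e ∈ G.edgeFinset, sqDiff x e := by
    rw [← List.sum_toFinset _ hp.edges_nodup]
    exact Finset.sum_le_sum_of_subset_of_nonneg
      (fun e he => by simpa using p.edges_subset_edgeSet (List.mem_toFinset.mp he))
      (fun e _ _ => sqDiff_nonneg x e)
  calc (x u - x v) ^ 2 ≤ p.length * (p.edges.map (sqDiff x)).sum :=
        p.sq_sub_le_length_mul_sum_sqDiff x
    _ ≤ G.diam * ∑ e ∈ G.edgeFinset, sqDiff x e := by
        have : 0 ≤ (p.edges.map (sqDiff x)).sum :=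
          List.sum_nonneg (by simpa using fun e _ => sqDiff_nonneg x e)
        gcongr

theorem Connected.four_div_card_mul_diam_mul_dotProduct_le [DecidableEq V] (hG : G.Connected)
    {x : V → ℝ} (hsum : ∑ i, x i = 0) :
    4 / (Fintype.card V * G.diam) * (x ⬝ᵥ x) ≤ x ⬝ᵥ (G.lapMatrix ℝ *ᵥ x) := by
  have : Nonempty V := hG.nonempty
  obtain ⟨u, -, hu⟩ := Finset.univ.exists_max_image x Finset.univ_nonempty
  obtain ⟨v, -, hv⟩ := Finset.univ.exists_min_image x Finset.univ_nonempty
  have hnorm : x ⬝ᵥ x ≤ Fintype.card V * (x u - x v) ^ 2 / 4 := by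
    simpa [dotProduct, ← sq] using Finset.univ.sum_sq_le_card_mul_sq_sub_div_four hsum
      (fun i _ => hv i (Finset.mem_univ i)) (fun i _ => hu i (Finset.mem_univ i))
  rw [dotProduct_lapMatrix_mulVec_eq_sum_sqDiff]
  calc 4 / (Fintype.card V * G.diam) * (x ⬝ᵥ x)
      ≤ 4 / (Fintype.card V * G.diam) * (Fintype.card V * (x u - x v) ^ 2 / 4) := by
        gcongr
    _ = (x u - x v) ^ 2 / G.diam := by
        have : (Fintype.card V : ℝ) ≠ 0 := by positivity
        field_simp
    _ ≤ ∑ e ∈ G.edgeFinset, sqDiff x e :=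
        div_le_of_le_mul₀ (Nat.cast_nonneg _) (Finset.sum_nonneg fun e _ => sqDiff_nonneg x e)
          ((hG.sq_sub_le_diam_mul_sum_sqDiff x u v).trans_eq (mul_comm _ _))

theorem two_mul_randicIndex :
    2 * randicIndex G =
      ∑ i, ∑ j, if G.Adj i j then 1 / √((G.degree i : ℝ) * G.degree j) else 0 := by
  unfold randicIndex
  convert two_mul_sum_edgeFinset_sym2Lift (G := G) _ _

theorem sqrt_degree_div_le_sum_adj (i : V) :
    √(G.degree i) / √(Fintype.card V - 1) ≤
      ∑ j, if G.Adj i j then 1 / √((G.degree i : ℝ) * G.degree j) else 0 := by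
  have hdeg_le (j : V) : (G.degree j : ℝ) ≤ Fintype.card V - 1 := by
    have := G.degree_lt_card_verts j
    rw [le_sub_iff_add_le]; exact_mod_cast this
  calc √(G.degree i) / √(Fintype.card V - 1)
      = ∑ _j ∈ G.neighborFinset i, 1 / √((G.degree i : ℝ) * (Fintype.card V - 1)) := by
        rw [Finset.sum_const, card_neighborFinset_eq_degree, nsmul_eq_mul,
          Real.sqrt_mul (Nat.cast_nonneg _), mul_one_div, div_mul_eq_div_div, Real.div_sqrt]
    _ ≤ ∑ j ∈ G.neighborFinset i, 1 / √((G.degree i : ℝ) * G.degree j) := by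
        refine Finset.sum_le_sum fun j hj => one_div_le_one_div_of_le ?_ ?_
        · have hadj := (G.mem_neighborFinset i j).mp hj
          have := hadj.reachable.degree_pos_left hadj.ne
          have := hadj.reachable.degree_pos_right hadj.ne
          positivity
        · gcongr; exact hdeg_le j
    _ = _ := by rw [neighborFinset_eq_filter, Finset.sum_filter]

theorem sum_sqrt_degree_div_le_two_mul_randicIndex :
    ∑ i, √(G.degree i) / √(Fintype.card V - 1) ≤ 2 * randicIndex G := by
  rw [two_mul_randicIndex]
  exact Finset.sum_le_sum fun i _ => sqrt_degree_div_le_sum_adj i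

theorem Connected.two_mul_card_le_sum_degrees_add_two (hG : G.Connected) :
    2 * Fintype.card V ≤ ∑ v, G.degree v + 2 := by
  have := hG.card_vert_le_card_edgeSet_add_one
  rw [Nat.card_eq_fintype_card, Nat.card_eq_fintype_card, ← edgeFinset_card] at this
  rw [sum_degrees_eq_twice_card_edges]
  omega

theorem Connected.card_sub_one_add_sqrt_le_sum_sqrt_degree (hG : G.Connected)
    (hV : 3 ≤ Fintype.card V) :
    (Fintype.card V - 1 : ℝ) + √(Fintype.card V - 1) ≤ ∑ v, √(G.degree v : ℝ) := by
  have : Nontrivial V := Fintype.one_lt_card_iff_nontrivial.mp (by omega)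
  set N : ℝ := Fintype.card V - 1 with hN
  have hN2 : 2 ≤ N := by rw [hN, le_sub_iff_add_le]; exact_mod_cast hV
  have hdeg : 2 * N ≤ ∑ v, (G.degree v : ℝ) := by
    have : (2 * Fintype.card V : ℝ) ≤ ∑ v, (G.degree v : ℝ) + 2 := by
      exact_mod_cast hG.two_mul_card_le_sum_degrees_add_two
    linarith
  have hchord : ∑ v, ((N - 1) + ((G.degree v : ℝ) - 1) * (√N - 1)) ≤
      ∑ v, (N - 1) * √(G.degree v) :=
    Finset.sum_le_sum fun v _ => sub_one_add_mul_sqrt_sub_one_le_mul_sqrt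
      (by exact_mod_cast hG.preconnected.degree_pos_of_nontrivial v)
      (by rw [hN, le_sub_iff_add_le]; exact_mod_cast G.degree_lt_card_verts v)
  simp only [Finset.sum_add_distrib, ← Finset.sum_mul, ← Finset.mul_sum, Finset.sum_sub_distrib,
    Finset.sum_const, Finset.card_univ, nsmul_eq_mul, mul_one] at hchord
  have hsqrt : 1 ≤ √N := Real.one_le_sqrt.mpr (by linarith)
  have hcard : (Fintype.card V : ℝ) = N + 1 := by rw [hN]; ring
  rw [hcard] at hchord
  have : (N - 1) * (N + √N) ≤ (N - 1) * ∑ v, √(G.degree v : ℝ) := by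
    nlinarith [mul_le_mul_of_nonneg_right hdeg (sub_nonneg.mpr hsqrt)]
  exact le_of_mul_le_mul_left this (by linarith)

theorem Connected.sqrt_card_sub_one_add_one_div_two_le_randicIndex (hG : G.Connected)
    (hV : 3 ≤ Fintype.card V) :
    (√(Fintype.card V - 1) + 1) / 2 ≤ randicIndex G := by
  set N : ℝ := Fintype.card V - 1 with hN
  have hN_pos : 0 < N := by rw [hN, sub_pos]; exact_mod_cast (by omega : 1 < Fintype.card V)
  have hsqrt : 0 < √N := Real.sqrt_pos.mpr hN_pos
  have hR := sum_sqrt_degree_div_le_two_mul_randicIndex (G := G)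
  rw [← hN, ← Finset.sum_div, div_le_iff₀ hsqrt] at hR
  have : √N * (√N + 1) ≤ √N * (2 * randicIndex G) := by
    nlinarith [hG.card_sub_one_add_sqrt_le_sum_sqrt_degree hV, Real.mul_self_sqrt hN_pos.le]
  linarith [le_of_mul_le_mul_left this hsqrt]

end SimpleGraph

theorem four_div_card_mul_diam_le_algebraicConnectivity {n : ℕ} (hn : 2 ≤ n)
    (G : SimpleGraph (Fin n)) (hG : G.Connected) :
    4 / (n * G.diam) ≤ algebraicConnectivity G := by
  classical
  apply le_csInf
  · let x : Fin n → ℝ := Pi.single ⟨0, by omega⟩ 1 - Pi.single ⟨1, by omega⟩ 1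
    have hx : x ≠ 0 := fun h => by
      simpa [x, Pi.single_apply, Fin.ext_iff] using congrFun h ⟨0, by omega⟩
    refine ⟨_, x, hx, ?_, rfl⟩
    simp [x, Finset.sum_sub_distrib]
  · rintro r ⟨x, hx, hsum, rfl⟩
    have hpos : 0 < x ⬝ᵥ x := lt_of_le_of_ne (Finset.sum_nonneg fun i _ => mul_self_nonneg _)
      (Ne.symm (dotProduct_self_eq_zero.not.mpr hx))
    rw [le_div_iff₀ hpos]
    simpa using hG.four_div_card_mul_diam_mul_dotProduct_le hsum

theorem pi_sq_le : π ^ 2 ≤ 9.9225 := by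
  nlinarith [Real.pi_lt_d2, Real.pi_pos]

theorem pi_sq_mul_le_of_two_le {t : ℝ} (ht : 2 ≤ t) : π ^ 2 * t ≤ 4 * (t ^ 2 + 1) := by
  nlinarith [mul_le_mul_of_nonneg_right pi_sq_le (by linarith : 0 ≤ t),
    mul_nonneg (sub_nonneg.mpr ht) (by linarith : (0 : ℝ) ≤ 4 * t - 1.9225)]

theorem pi_sq_mul_le_of_three_le {n : ℝ} (hn : 3 ≤ n) :
    π ^ 2 * (n - 3 + 2 * √2) ≤ 4 * n * (√(n - 1) + 1) := by
  set s := √(n - 1)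
  have hs_sq : s ^ 2 = n - 1 := Real.sq_sqrt (by linarith)
  have hs : √2 ≤ s := Real.sqrt_le_sqrt (by linarith)
  have h2_sq : √2 ^ 2 = 2 := Real.sq_sqrt (by norm_num)
  have h2_lo : 1.414 ≤ √2 := by nlinarith [Real.sqrt_nonneg 2]
  have h2_hi : √2 ≤ 1.4143 := by nlinarith [Real.sqrt_nonneg 2]
  rw [show n = s ^ 2 + 1 by linarith]
  nlinarith [pi_sq_le, mul_nonneg (sub_nonneg.mpr (h2_lo.trans hs)) (sq_nonneg (s - 1.414)),
    sq_nonneg (s - 1.414), Real.pi_pos]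

theorem pi_sq_mul_mul_le {n D : ℕ} (hn : 3 ≤ n) (hD : 1 ≤ D)
    (hDn : (D : ℝ) ≤ ((n : ℝ) - 1) ^ ((1 : ℝ) / 4)) :
    π ^ 2 * (n - 3 + 2 * √2) * D ≤ 4 * n * (√(n - 1) + 1) := by
  have hn' : (3 : ℝ) ≤ n := by exact_mod_cast hn
  rcases hD.eq_or_lt with rfl | hD2
  · simpa using pi_sq_mul_le_of_three_le hn'
  set t := ((n : ℝ) - 1) ^ ((1 : ℝ) / 4)
  have ht_sq : t ^ 2 = √(n - 1) := by
    rw [Real.sqrt_eq_rpow, ← Real.rpow_natCast, ← Real.rpow_mul (by linarith)]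
    norm_num
  have ht2 : 2 ≤ t := le_trans (by exact_mod_cast hD2) hDn
  have hA : (0 : ℝ) ≤ n - 3 + 2 * √2 := by positivity
  have hA_le : (n : ℝ) - 3 + 2 * √2 ≤ n := by
    nlinarith [Real.sq_sqrt (show (0 : ℝ) ≤ 2 by norm_num), Real.sqrt_nonneg 2]
  calc π ^ 2 * (n - 3 + 2 * √2) * D ≤ π ^ 2 * n * t := by gcongr
    _ = n * (π ^ 2 * t) := by ring
    _ ≤ n * (4 * (t ^ 2 + 1)) :=
        mul_le_mul_of_nonneg_left (pi_sq_mul_le_of_two_le ht2) (Nat.cast_nonneg n)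
    _ = 4 * n * (√(n - 1) + 1) := by rw [ht_sq]; ring

theorem randic_mul_algConn_path_le {n D : ℕ} (hn : 3 ≤ n) (hD : 1 ≤ D)
    (hDn : (D : ℝ) ≤ ((n : ℝ) - 1) ^ ((1 : ℝ) / 4)) :
    ((n : ℝ) - 3 + 2 * √2) * (1 - Real.cos (π / n)) ≤ 2 * (√(n - 1) + 1) / (n * D) := by
  have hn' : (0 : ℝ) < n := by positivity
  have hD' : (0 : ℝ) < D := by exact_mod_cast hD
  have hA : (0 : ℝ) ≤ n - 3 + 2 * √2 := by
    have : (3 : ℝ) ≤ n := by exact_mod_cast hn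
    positivity
  have hcos : 1 - Real.cos (π / n) ≤ π ^ 2 / (2 * n ^ 2) := by
    have := Real.one_sub_sq_div_two_le_cos (x := π / n)
    rw [div_pow] at this
    linarith [show π ^ 2 / n ^ 2 / 2 = π ^ 2 / (2 * n ^ 2) by ring]
  calc ((n : ℝ) - 3 + 2 * √2) * (1 - Real.cos (π / n))
      ≤ (n - 3 + 2 * √2) * (π ^ 2 / (2 * n ^ 2)) := by gcongr
    _ = π ^ 2 * (n - 3 + 2 * √2) * D / (2 * n ^ 2 * D) := by field_simp
    _ ≤ 4 * n * (√(n - 1) + 1) / (2 * n ^ 2 * D) :=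
        div_le_div_of_nonneg_right (pi_sq_mul_mul_le hn hD hDn) (by positivity)
    _ = 2 * (√(n - 1) + 1) / (n * D) := by field_simp; ring

theorem randic_mul_algConn_ge_path_of_diam_small
    {n : ℕ} (hn : 3 ≤ n) (G : SimpleGraph (Fin n)) (hG : G.Connected)
    (hD : (G.diam : ℝ) ≤ ((n : ℝ) - 1) ^ ((1 : ℝ) / 4)) :
    randicIndex G * algebraicConnectivity G ≥
      ((n : ℝ) - 3 + 2 * Real.sqrt 2) * (1 - Real.cos (Real.pi / n)) := by
  classical
  have : Nontrivial (Fin n) := Fin.nontrivial_iff_two_le.mpr (by omega)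
  have hdiam : 1 ≤ G.diam :=
    Nat.one_le_iff_ne_zero.mpr (G.diam_ne_zero_of_ediam_ne_top
      (SimpleGraph.connected_iff_ediam_ne_top.mp hG))
  have hR := hG.sqrt_card_sub_one_add_one_div_two_le_randicIndex (by simpa using hn)
  have ha := four_div_card_mul_diam_le_algebraicConnectivity (by omega) G hG
  rw [Fintype.card_fin] at hR
  calc ((n : ℝ) - 3 + 2 * √2) * (1 - Real.cos (π / n))
      ≤ 2 * (√(n - 1) + 1) / (n * G.diam) := randic_mul_algConn_path_le hn hdiam hD
    _ = (√(n - 1) + 1) / 2 * (4 / (n * G.diam)) := by ring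
    _ ≤ randicIndex G * algebraicConnectivity G :=
        mul_le_mul hR ha (by positivity) ((by positivity : (0 : ℝ) ≤ _).trans hR)
end

section
/- For any tree T on n ≥ 3 vertices, the Randić index satisfies R(T) ≤ (n - 3 + 2√2)/2, with equality if and only if T is the path P_n. -/
open Finset Real Matrix

/-!
Expanding `(1/√a - 1/√b)² ≥ 0` gives, on every edge `uv`,
`1/√(d(u)d(v)) = 1/(2d(u)) + 1/(2d(v)) - (1/√d(u) - 1/√d(v))²/2`, and the first two terms sum
over the edges to `n/2`. Hence `R(T) = n/2 - D`, where `D` is the sum of the squared terms (the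
defects). When `n ≥ 3` no edge joins two leaves, so every pendant edge has defect at least
`(1 - 1/√2)²/2 = (3 - 2√2)/4`, with equality exactly when the other endpoint has degree 2. A tree
has `2 + ∑_v max(d(v) - 2, 0) ≥ 2` leaves, which gives the bound. Equality forces exactly two
leaves, i.e. maximum degree 2, and a tree of maximum degree 2 is a path. Conversely, in a path
every non-pendant edge joins two vertices of degree 2 and has defect 0.
-/

theorem one_div_sqrt_mul_eq {a b : ℝ} (ha : 0 < a) (hb : 0 < b) :
    1 / √(a * b) = 1 / (2 * a) + 1 / (2 * b) - (1 / √a - 1 / √b) ^ 2 / 2 := by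
  obtain ⟨x, hx, rfl⟩ : ∃ x > 0, x ^ 2 = a := ⟨√a, sqrt_pos.2 ha, sq_sqrt ha.le⟩
  obtain ⟨y, hy, rfl⟩ : ∃ y > 0, y ^ 2 = b := ⟨√b, sqrt_pos.2 hb, sq_sqrt hb.le⟩
  rw [← mul_pow, sqrt_sq (by positivity), sqrt_sq hx.le, sqrt_sq hy.le]
  field_simp
  ring

/-- The defect of an edge joining a leaf to a vertex of degree 2. -/
noncomputable def leafDefect : ℝ := (1 - 1 / √2) ^ 2 / 2

theorem leafDefect_eq : leafDefect = (3 - 2 * √2) / 4 := by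
  have h := sq_sqrt (zero_le_two (α := ℝ))
  rw [leafDefect, sub_sq, div_pow, h]
  field_simp
  ring_nf
  rw [h]
  ring

theorem leafDefect_pos : 0 < leafDefect := by
  have : 1 / √2 < 1 := by rw [div_lt_one (by positivity)]; exact one_lt_sqrt_two
  have : 0 < 1 - 1 / √2 := by linarith
  rw [leafDefect]
  positivity

theorem leafDefect_le {d : ℝ} (hd : 2 ≤ d) : leafDefect ≤ (1 - 1 / √d) ^ 2 / 2 := by
  have h2 : 1 / √d ≤ 1 / √2 := one_div_le_one_div_of_le (by positivity) (sqrt_le_sqrt hd)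
  have h1 : 1 / √2 ≤ 1 := by rw [div_le_one (by positivity)]; exact one_lt_sqrt_two.le
  rw [leafDefect]
  gcongr

theorem ite_add_ite_le_sq_sub {a b : ℕ} (ha : 1 ≤ a) (hb : 1 ≤ b) (hab : a ≠ 1 ∨ b ≠ 1) :
    (if a = 1 then leafDefect else 0) + (if b = 1 then leafDefect else 0) ≤
      (1 / √a - 1 / √b) ^ 2 / 2 := by
  rcases ha.eq_or_lt with rfl | ha <;> rcases hb.eq_or_lt with rfl | hb
  · simp at hab
  · simpa [hb.ne'] using leafDefect_le (by exact_mod_cast hb)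
  · simpa [ha.ne', sub_sq_comm] using leafDefect_le (by exact_mod_cast ha)
  · simp only [ha.ne', hb.ne', if_false, add_zero]
    positivity

theorem ite_add_ite_eq_sq_sub {a b : ℕ} (ha : 1 ≤ a) (hb : 1 ≤ b) (ha2 : a ≤ 2) (hb2 : b ≤ 2)
    (hab : a ≠ 1 ∨ b ≠ 1) :
    (if a = 1 then leafDefect else 0) + (if b = 1 then leafDefect else 0) =
      (1 / √a - 1 / √b) ^ 2 / 2 := by
  interval_cases a <;> interval_cases b
  · simp at hab
  all_goals norm_num [leafDefect, sub_sq_comm]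

namespace SimpleGraph

variable {V : Type*}

theorem Preconnected.mem_of_forall_adj_mem {G : SimpleGraph V} (hG : G.Preconnected) {s : Set V}
    (hs : ∀ ⦃u v⦄, u ∈ s → G.Adj u v → v ∈ s) {u : V} (hu : u ∈ s) (v : V) : v ∈ s := by
  by_contra hv
  obtain ⟨d, -, hd, hd'⟩ := (hG u v).some.exists_boundary_dart s hu hv
  exact hd' (hs hd d.adj)

theorem Subgraph.eq_top_of_neighborSet_eq {G : SimpleGraph V} (hG : G.Preconnected)
    {H : G.Subgraph} {v : V} (hv : v ∈ H.verts)
    (h : ∀ w ∈ H.verts, H.neighborSet w = G.neighborSet w) : H = ⊤ := by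
  have hverts : ∀ w, w ∈ H.verts := hG.mem_of_forall_adj_mem
    (fun a b ha hab => H.edge_vert (H.adj_symm (show b ∈ H.neighborSet a from h a ha ▸ hab))) hv
  ext a b
  · simp [hverts]
  · exact Set.ext_iff.mp (h a (hverts a)) b

theorem pathGraph_degree_le_two {n : ℕ} [DecidableRel (pathGraph n).Adj] (i : Fin n) :
    (pathGraph n).degree i ≤ 2 := by
  rw [← card_neighborFinset_eq_degree]
  calc #((pathGraph n).neighborFinset i) ≤ #({i.val - 1, i.val + 1} : Finset ℕ) :=
        card_le_card_of_injOn Fin.val (fun j hj => by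
          simp only [coe_neighborFinset, mem_neighborSet, pathGraph_adj] at hj
          simp only [coe_insert, coe_singleton, Set.mem_insert_iff, Set.mem_singleton_iff]
          omega) Fin.val_injective.injOn
    _ ≤ 2 := card_le_two

section Finite

variable [Fintype V] (G : SimpleGraph V) [DecidableRel G.Adj]

theorem sum_degree_smul_eq_sum_edgeFinset {M : Type*} [AddCommMonoid M] {f : V → M}
    {g : Sym2 V → M} (h : ∀ u v, G.Adj u v → f u + f v = g s(u, v)) :
    ∑ v, G.degree v • f v = ∑ e ∈ G.edgeFinset, g e := by
  classical
  have hfst : ∑ v, G.degree v • f v = ∑ d : G.Dart, f d.fst := by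
    rw [← sum_fiberwise_of_maps_to (t := univ) (g := fun d : G.Dart => d.fst)
      fun _ _ => mem_univ _]
    refine sum_congr rfl fun v _ => ?_
    rw [sum_congr rfl fun d hd => congrArg f (mem_filter.mp hd).2, sum_const,
      ← G.dart_fst_fiber_card_eq_degree v]
  rw [hfst, ← sum_fiberwise_of_maps_to (t := G.edgeFinset) (g := Dart.edge)
    fun d _ => mem_edgeFinset.mpr d.edge_mem]
  refine sum_congr rfl fun e he => ?_
  induction e with
  | h u v =>
    let d : G.Dart := ⟨(u, v), mem_edgeFinset.mp he⟩
    rw [show s(u, v) = d.edge from rfl, d.edge_fiber, sum_pair d.symm_ne.symm]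
    exact h u v d.adj

theorem sum_degree_smul_le_sum_edgeFinset {M : Type*} [AddCommMonoid M] [PartialOrder M]
    [IsOrderedAddMonoid M] {f : V → M} {g : Sym2 V → M}
    (h : ∀ u v, G.Adj u v → f u + f v ≤ g s(u, v)) :
    ∑ v, G.degree v • f v ≤ ∑ e ∈ G.edgeFinset, g e := by
  rw [G.sum_degree_smul_eq_sum_edgeFinset
    (g := Sym2.lift ⟨fun u v => f u + f v, fun _ _ => add_comm _ _⟩) fun _ _ _ => rfl]
  refine sum_le_sum fun e he => ?_
  induction e with
  | h u v => exact h u v (mem_edgeFinset.mp he)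

theorem sum_degree_smul_ite_degree_eq_one {M : Type*} [AddCommMonoid M] (c : M) :
    ∑ v, G.degree v • (if G.degree v = 1 then c else 0) = #{v | G.degree v = 1} • c := by
  rw [card_eq_sum_ones, sum_smul, sum_filter]
  refine sum_congr rfl fun v _ => ?_
  split_ifs with h <;> simp [h]

noncomputable def randicDefect : Sym2 V → ℝ :=
  Sym2.lift ⟨fun u v => (1 / √(G.degree u) - 1 / √(G.degree v)) ^ 2 / 2, fun _ _ => by ring⟩

@[simp]
theorem randicDefect_mk (u v : V) :
    G.randicDefect s(u, v) = (1 / √(G.degree u) - 1 / √(G.degree v)) ^ 2 / 2 :=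
  rfl

variable {G}

theorem randicIndex_add_sum_randicDefect (hdeg : ∀ v, 0 < G.degree v) :
    randicIndex G + ∑ e ∈ G.edgeFinset, G.randicDefect e = Fintype.card V / 2 := by
  have hdeg' : ∀ v, (0 : ℝ) < G.degree v := fun v => Nat.cast_pos.mpr (hdeg v)
  calc randicIndex G + ∑ e ∈ G.edgeFinset, G.randicDefect e
      = ∑ e ∈ G.edgeFinset, (Sym2.lift ⟨fun u v => 1 / √((G.degree u : ℝ) * G.degree v),
          fun u v => by simp [mul_comm]⟩ e + G.randicDefect e) := by
        rw [sum_add_distrib, randicIndex]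
        convert rfl
    _ = ∑ v, G.degree v • (1 / (2 * G.degree v) : ℝ) := by
        refine (G.sum_degree_smul_eq_sum_edgeFinset fun u v _ => ?_).symm
        simp only [Sym2.lift_mk, randicDefect_mk]
        rw [one_div_sqrt_mul_eq (hdeg' u) (hdeg' v)]
        ring
    _ = Fintype.card V / 2 := by
        have h : ∀ v, G.degree v • (1 / (2 * G.degree v) : ℝ) = 1 / 2 := fun v => by
          rw [nsmul_eq_mul]
          field_simp [(hdeg' v).ne']
        rw [sum_congr rfl fun v _ => h v, sum_const, card_univ, nsmul_eq_mul]
        ring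

theorem Preconnected.degree_ne_one_of_adj (hG : G.Preconnected) (hV : 2 < Fintype.card V)
    {u v : V} (huv : G.Adj u v) (hu : G.degree u = 1) : G.degree v ≠ 1 := by
  classical
  intro hv
  have hmem := hG.mem_of_forall_adj_mem (s := {u, v}) ?_ (Set.mem_insert u _)
  · have hsub : (univ : Finset V) ⊆ {u, v} := fun w _ => by simpa using hmem w
    have := card_le_card hsub
    have := card_le_two (a := u) (b := v)
    rw [card_univ] at *
    omega
  · rintro a b (rfl | rfl) hab
    · exact .inr ((degree_eq_one_iff_existsUnique_adj.mp hu).unique hab huv)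
    · exact .inl ((degree_eq_one_iff_existsUnique_adj.mp hv).unique hab huv.symm)

theorem Preconnected.card_leaves_mul_leafDefect_le_sum_randicDefect (hG : G.Preconnected)
    (hV : 2 < Fintype.card V) :
    #{v | G.degree v = 1} * leafDefect ≤ ∑ e ∈ G.edgeFinset, G.randicDefect e := by
  have : Nontrivial V := Fintype.one_lt_card_iff_nontrivial.mp (by omega)
  have hpos := hG.degree_pos_of_nontrivial
  rw [← nsmul_eq_mul, ← sum_degree_smul_ite_degree_eq_one]
  refine G.sum_degree_smul_le_sum_edgeFinset fun u v huv => ?_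
  rw [randicDefect_mk]
  exact ite_add_ite_le_sq_sub (hpos u) (hpos v)
    (or_iff_not_imp_left.mpr fun hu => hG.degree_ne_one_of_adj hV huv (not_not.mp hu))

theorem Preconnected.sum_randicDefect_eq_card_leaves_mul_leafDefect (hG : G.Preconnected)
    (hV : 2 < Fintype.card V) (hdeg : ∀ v, G.degree v ≤ 2) :
    ∑ e ∈ G.edgeFinset, G.randicDefect e = #{v | G.degree v = 1} * leafDefect := by
  have : Nontrivial V := Fintype.one_lt_card_iff_nontrivial.mp (by omega)
  have hpos := hG.degree_pos_of_nontrivial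
  rw [← nsmul_eq_mul, ← sum_degree_smul_ite_degree_eq_one]
  refine (G.sum_degree_smul_eq_sum_edgeFinset fun u v huv => ?_).symm
  rw [randicDefect_mk]
  exact ite_add_ite_eq_sq_sub (hpos u) (hpos v) (hdeg u) (hdeg v)
    (or_iff_not_imp_left.mpr fun hu => hG.degree_ne_one_of_adj hV huv (not_not.mp hu))

theorem Preconnected.randicIndex_le_card_div_two_sub (hG : G.Preconnected)
    (hV : 2 < Fintype.card V) :
    randicIndex G ≤ Fintype.card V / 2 - #{v | G.degree v = 1} * leafDefect := by
  have : Nontrivial V := Fintype.one_lt_card_iff_nontrivial.mp (by omega)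
  linarith [randicIndex_add_sum_randicDefect fun v => hG.degree_pos_of_nontrivial v,
    hG.card_leaves_mul_leafDefect_le_sum_randicDefect hV]

theorem Preconnected.randicIndex_eq_card_div_two_sub (hG : G.Preconnected) (hV : 2 < Fintype.card V)
    (hdeg : ∀ v, G.degree v ≤ 2) :
    randicIndex G = Fintype.card V / 2 - #{v | G.degree v = 1} * leafDefect := by
  have : Nontrivial V := Fintype.one_lt_card_iff_nontrivial.mp (by omega)
  linarith [randicIndex_add_sum_randicDefect fun v => hG.degree_pos_of_nontrivial v,
    hG.sum_randicDefect_eq_card_leaves_mul_leafDefect hV hdeg]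

theorem IsTree.card_leaves_eq [Nontrivial V] (hG : G.IsTree) :
    #{v | G.degree v = 1} = 2 + ∑ v, (G.degree v - 2) := by
  have hpos := hG.connected.preconnected.degree_pos_of_nontrivial
  have hE := hG.card_edgeFinset
  have hsum := G.sum_degrees_eq_twice_card_edges
  have hleaf : ∀ v, (if G.degree v = 1 then 1 else 0) + G.degree v = 2 + (G.degree v - 2) :=
    fun v => by have := hpos v; split_ifs <;> omega
  have := sum_congr rfl fun v (_ : v ∈ univ) => hleaf v
  rw [sum_add_distrib, sum_add_distrib, sum_const, card_univ, smul_eq_mul, ← card_filter] at this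
  have := Fintype.card_pos (α := V)
  omega

theorem Walk.IsPath.neighborSet_toSubgraph_eq {u v w : V} {p : G.Walk u v} (hp : p.IsPath)
    (huv : u ≠ v) (hu : G.degree u = 1) (hv : G.degree v = 1) (hdeg : ∀ x, G.degree x ≤ 2)
    (hw : w ∈ p.support) : p.toSubgraph.neighborSet w = G.neighborSet w := by
  refine Set.eq_of_subset_of_ncard_le (p.toSubgraph.neighborSet_subset w) ?_ (Set.toFinite _)
  rw [Set.ncard_eq_toFinset_card', ← neighborFinset_def, card_neighborFinset_eq_degree]
  have hnil : ¬p.Nil := Walk.not_nil_of_ne huv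
  obtain ⟨i, rfl, hi⟩ := Walk.mem_support_iff_exists_getVert.mp hw
  rcases Nat.eq_zero_or_pos i with rfl | hi0
  · rw [Walk.getVert_zero, hp.neighborSet_toSubgraph_startpoint hnil, Set.ncard_singleton, hu]
  rcases hi.eq_or_lt with rfl | hil
  · rw [Walk.getVert_length, hp.neighborSet_toSubgraph_endpoint hnil, Set.ncard_singleton, hv]
  rw [hp.ncard_neighborSet_toSubgraph_internal_eq_two hi0.ne' hil]
  exact hdeg _

theorem IsTree.nonempty_iso_pathGraph_of_degree_le_two [Nontrivial V] (hG : G.IsTree)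
    (hdeg : ∀ v, G.degree v ≤ 2) : Nonempty (G ≃g pathGraph (Fintype.card V)) := by
  classical
  obtain ⟨u, v, huv, hu, hv⟩ := hG.exists_ne_and_degree_eq_one
  obtain ⟨p, hp⟩ := (hG.connected.preconnected u v).exists_isPath
  -- every vertex of the path between two leaves already has all its neighbours on the path
  have htop : p.toSubgraph = ⊤ :=
    Subgraph.eq_top_of_neighborSet_eq hG.connected.preconnected p.start_mem_verts_toSubgraph
      fun w hw => hp.neighborSet_toSubgraph_eq huv hu hv hdeg (p.mem_verts_toSubgraph.mp hw)
  have e : pathGraph (p.length + 1) ≃g G :=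
    hp.pathGraphIsoToSubgraph.trans (htop ▸ Subgraph.topIso)
  have hlen : p.length + 1 = Fintype.card V := by simpa using Fintype.card_congr e.toEquiv
  exact ⟨hlen ▸ e.symm⟩

theorem IsTree.nonempty_iso_pathGraph_iff [Nontrivial V] (hG : G.IsTree) :
    Nonempty (G ≃g pathGraph (Fintype.card V)) ↔ ∀ v, G.degree v ≤ 2 := by
  classical
  refine ⟨fun ⟨e⟩ v => ?_, hG.nonempty_iso_pathGraph_of_degree_le_two⟩
  rw [← e.degree_eq]
  exact pathGraph_degree_le_two _

theorem IsTree.randicIndex_le (hG : G.IsTree) (hV : 3 ≤ Fintype.card V) :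
    randicIndex G ≤ (Fintype.card V - 3 + 2 * √2) / 2 := by
  have : Nontrivial V := Fintype.one_lt_card_iff_nontrivial.mp (by omega)
  have hL : (2 : ℝ) ≤ #{v | G.degree v = 1} := by exact_mod_cast hG.card_leaves_eq ▸ le_self_add
  calc randicIndex G ≤ Fintype.card V / 2 - #{v | G.degree v = 1} * leafDefect :=
        hG.connected.preconnected.randicIndex_le_card_div_two_sub hV
    _ ≤ Fintype.card V / 2 - 2 * leafDefect := by gcongr; exact leafDefect_pos.le
    _ = (Fintype.card V - 3 + 2 * √2) / 2 := by rw [leafDefect_eq]; ring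

theorem IsTree.randicIndex_eq_iff (hG : G.IsTree) (hV : 3 ≤ Fintype.card V) :
    randicIndex G = (Fintype.card V - 3 + 2 * √2) / 2 ↔ ∀ v, G.degree v ≤ 2 := by
  have : Nontrivial V := Fintype.one_lt_card_iff_nontrivial.mp (by omega)
  have hbound : (Fintype.card V - 3 + 2 * √2) / 2 = Fintype.card V / 2 - 2 * leafDefect := by
    rw [leafDefect_eq]; ring
  have hL := hG.card_leaves_eq
  rw [hbound]
  constructor
  · intro h
    have hle := hG.connected.preconnected.randicIndex_le_card_div_two_sub hV
    have h2 : (#{v | G.degree v = 1} : ℝ) ≤ 2 :=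
      le_of_mul_le_mul_right (by linarith) leafDefect_pos
    have hsum : ∑ v, (G.degree v - 2) = 0 := by
      have : #{v | G.degree v = 1} ≤ 2 := by exact_mod_cast h2
      omega
    intro v
    have := sum_eq_zero_iff.mp hsum v (mem_univ v)
    omega
  · intro hdeg
    have hsum : ∑ v, (G.degree v - 2) = 0 := sum_eq_zero fun v _ => by have := hdeg v; omega
    rw [hG.connected.preconnected.randicIndex_eq_card_div_two_sub hV hdeg, hL, hsum]
    norm_num

end Finite

end SimpleGraph

theorem randicIndex_tree_le_path
    {n : ℕ} (hn : 3 ≤ n) (T : SimpleGraph (Fin n)) (hT : T.IsTree) :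
    randicIndex T ≤ ((n : ℝ) - 3 + 2 * Real.sqrt 2) / 2 ∧
    (randicIndex T = ((n : ℝ) - 3 + 2 * Real.sqrt 2) / 2 ↔
      Nonempty (T ≃g SimpleGraph.pathGraph n)) := by
  classical
  have hV : 3 ≤ Fintype.card (Fin n) := by simpa using hn
  have : Nontrivial (Fin n) := Fin.nontrivial_iff_two_le.mpr (by omega)
  have hle := hT.randicIndex_le hV
  have heq := (hT.randicIndex_eq_iff hV).trans hT.nonempty_iso_pathGraph_iff.symm
  rw [Fintype.card_fin] at hle heq
  exact ⟨hle, heq⟩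
end
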